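/- arXiv:2301.07466 — 2 statements merged into one kernel-verified Lean document; each statement's English description precedes it below -/
import Mathlib

section
/- (Theorem A, ascent/descent) Let g be a positive odd integer and k ≥ 1. Then the sequence f^[i](g·2^k − 1) is strictly increasing for i = 0, 1, ..., k, and the next term is strictly smaller: f^[k+1](g·2^k − 1) = (g·3^k − 1)/2 < f^[k](g·2^k − 1). Hence g·3^k − 1 is the highest number in the continually ascending forward Collatz sequence starting from g·2^k − 1. -/
/-!
On odd numbers of the form `2a - 1` the Collatz map acts as `2a - 1 ↦ 3a - 1`, an ascent.
Starting from `g·2^k - 1`, each step trades a factor `2` for a factor `3`, so the first `k`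
iterates are `g·2^(k-i)·3^i - 1`, all odd for `i < k`. After `k` steps we reach
`g·3^k - 1`, which is even because `g` is odd, so the next step halves it.
-/

/-- The (shortcut) Collatz map. -/
def collatz (n : ℕ) : ℕ := if n % 2 = 0 then n / 2 else (3 * n + 1) / 2

/-- The reduced Collatz (Syracuse) map: remove all factors of 2 from 3n+1. -/
def syracuse (n : ℕ) : ℕ := (3 * n + 1) / 2 ^ (padicValNat 2 (3 * n + 1))

theorem collatz_of_even {n : ℕ} (hn : Even n) : collatz n = n / 2 :=
  if_pos (Nat.even_iff.mp hn)

theorem collatz_lt_of_even {n : ℕ} (hn : Even n) (hpos : 0 < n) : collatz n < n := by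
  rw [collatz_of_even hn]
  omega

theorem collatz_two_mul_sub_one {a : ℕ} (ha : 0 < a) : collatz (2 * a - 1) = 3 * a - 1 := by
  rw [collatz, if_neg (by omega)]
  omega

theorem lt_collatz_two_mul_sub_one {a : ℕ} (ha : 0 < a) : 2 * a - 1 < collatz (2 * a - 1) := by
  rw [collatz_two_mul_sub_one ha]
  omega

theorem collatz_iterate_mul_two_pow_sub_one (i : ℕ) {a : ℕ} (ha : 0 < a) :
    collatz^[i] (a * 2 ^ i - 1) = a * 3 ^ i - 1 := by
  induction i generalizing a with
  | zero => simp
  | succ i ih =>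
    rw [Function.iterate_succ_apply, show a * 2 ^ (i + 1) = 2 * (a * 2 ^ i) by ring,
      collatz_two_mul_sub_one (by positivity), show 3 * (a * 2 ^ i) = 3 * a * 2 ^ i by ring,
      ih (by positivity)]
    ring_nf

theorem collatz_iterate_mul_two_pow_sub_one_of_le {i k : ℕ} (hik : i ≤ k) {a : ℕ} (ha : 0 < a) :
    collatz^[i] (a * 2 ^ k - 1) = a * 2 ^ (k - i) * 3 ^ i - 1 := by
  rw [← collatz_iterate_mul_two_pow_sub_one i (by positivity), mul_assoc, ← pow_add,
    Nat.sub_add_cancel hik]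

theorem stmt4_general (g k : ℕ) (hgodd : Odd g) (hk : 1 ≤ k) :
    (∀ i < k, collatz^[i] (g * 2 ^ k - 1) < collatz^[i + 1] (g * 2 ^ k - 1)) ∧
    collatz^[k + 1] (g * 2 ^ k - 1) = (g * 3 ^ k - 1) / 2 ∧
    collatz^[k + 1] (g * 2 ^ k - 1) < collatz^[k] (g * 2 ^ k - 1) := by
  have hg := hgodd.pos
  have hpeak : collatz^[k] (g * 2 ^ k - 1) = g * 3 ^ k - 1 := by
    simpa using collatz_iterate_mul_two_pow_sub_one_of_le le_rfl hg
  have heven : Even (g * 3 ^ k - 1) := Nat.Odd.sub_odd (hgodd.mul (Odd.pow ⟨1, rfl⟩)) odd_one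
  have hpos : 0 < g * 3 ^ k - 1 := by
    have : 3 ≤ g * 3 ^ k := le_mul_of_one_le_of_le hg (Nat.le_self_pow (by omega) 3)
    omega
  refine ⟨fun i hi => ?_, ?_, ?_⟩
  · obtain ⟨j, hj⟩ : ∃ j, k - i = j + 1 := ⟨k - i - 1, by omega⟩
    rw [Function.iterate_succ_apply', collatz_iterate_mul_two_pow_sub_one_of_le hi.le hg, hj,
      show g * 2 ^ (j + 1) * 3 ^ i = 2 * (g * 2 ^ j * 3 ^ i) by ring]
    exact lt_collatz_two_mul_sub_one (by positivity)
  · rw [Function.iterate_succ_apply', hpeak, collatz_of_even heven]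
  · rw [Function.iterate_succ_apply', hpeak]
    exact collatz_lt_of_even heven hpos

theorem stmt4 (g k : ℕ) (hg : 0 < g) (hgodd : Odd g) (hk : 1 ≤ k) :
    (∀ i < k, collatz^[i] (g * 2 ^ k - 1) < collatz^[i + 1] (g * 2 ^ k - 1)) ∧
    collatz^[k + 1] (g * 2 ^ k - 1) = (g * 3 ^ k - 1) / 2 ∧
    collatz^[k + 1] (g * 2 ^ k - 1) < collatz^[k] (g * 2 ^ k - 1) :=
  stmt4_general g k hgodd hk
end

section
/- (Theorem S, combined) Suppose n > 0 does not reach 1 under the Collatz map f, while every positive integer m with m < n reaches 1. Then n is odd, n % 3 ≠ 2, n % 4 ≠ 1, and n % 16 ≠ 3; in particular n is not of any of the forms 2w, 1+4w, 2+3w, or 3+16w for a whole number w. -/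
def ReachesOne (m : ℕ) : Prop := ∃ j, collatz^[j] m = 1

def IsMinimalNonreaching (n : ℕ) : Prop := ¬ ReachesOne n ∧ ∀ m, 0 < m → m < n → ReachesOne m

lemma collatz_two_mul (k : ℕ) : collatz (2 * k) = k := by
  unfold collatz; split <;> omega

lemma collatz_two_mul_add_one (k : ℕ) : collatz (2 * k + 1) = 3 * k + 2 := by
  unfold collatz; split <;> omega

lemma collatz_iterate_four_mul_add_one (k : ℕ) : collatz^[2] (4 * k + 1) = 3 * k + 1 := by
  rw [Function.iterate_succ_apply, Function.iterate_one, show 4 * k + 1 = 2 * (2 * k) + 1 by ring,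
    collatz_two_mul_add_one, show 3 * (2 * k) + 2 = 2 * (3 * k + 1) by ring, collatz_two_mul]

lemma collatz_iterate_sixteen_mul_add_three (k : ℕ) : collatz^[4] (16 * k + 3) = 9 * k + 2 := by
  simp only [Function.iterate_succ_apply, Function.iterate_zero_apply]
  rw [show 16 * k + 3 = 2 * (8 * k + 1) + 1 by ring, collatz_two_mul_add_one,
    show 3 * (8 * k + 1) + 2 = 2 * (12 * k + 2) + 1 by ring, collatz_two_mul_add_one,
    show 3 * (12 * k + 2) + 2 = 2 * (2 * (9 * k + 2)) by ring, collatz_two_mul, collatz_two_mul]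

lemma ReachesOne.of_iterate {m : ℕ} (k : ℕ) (h : ReachesOne (collatz^[k] m)) : ReachesOne m := by
  obtain ⟨j, hj⟩ := h
  exact ⟨j + k, by rwa [Function.iterate_add_apply]⟩

lemma ReachesOne.collatz_of_ne_one {m : ℕ} (h : ReachesOne m) (hm : m ≠ 1) :
    ReachesOne (collatz m) := by
  obtain ⟨_ | j, hj⟩ := h
  · exact absurd hj hm
  · exact ⟨j, by rwa [Function.iterate_succ_apply] at hj⟩

namespace IsMinimalNonreaching

variable {n : ℕ} (h : IsMinimalNonreaching n)
include h

lemma ne_one : n ≠ 1 := by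
  rintro rfl
  exact h.1 ⟨0, rfl⟩

lemma le_collatz_iterate (k : ℕ) (hpos : 0 < collatz^[k] n) : n ≤ collatz^[k] n := by
  by_contra! hlt
  exact h.1 ((h.2 _ hpos hlt).of_iterate k)

lemma le_of_collatz_eq {m : ℕ} (hm : 1 < m) (hmn : collatz m = n) : n ≤ m := by
  by_contra! hlt
  exact h.1 (hmn ▸ (h.2 m (by omega) hlt).collatz_of_ne_one (by omega))

end IsMinimalNonreaching

theorem stmt12 (n : ℕ) (hn : 0 < n)
    (hdiv : ¬ ∃ j : ℕ, collatz^[j] n = 1)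
    (hmin : ∀ m : ℕ, 0 < m → m < n → ∃ j : ℕ, collatz^[j] m = 1) :
    Odd n ∧ n % 3 ≠ 2 ∧ n % 4 ≠ 1 ∧ n % 16 ≠ 3 ∧
    (∀ w : ℕ, n ≠ 2 * w ∧ n ≠ 1 + 4 * w ∧ n ≠ 2 + 3 * w ∧ n ≠ 3 + 16 * w) := by
  have h : IsMinimalNonreaching n := ⟨hdiv, hmin⟩
  have hne1 := h.ne_one
  have hodd : n % 2 = 1 := by
    by_contra hev
    have := h.le_collatz_iterate 1
    rw [Function.iterate_one, show n = 2 * (n / 2) by omega, collatz_two_mul] at this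
    omega
  have h3 : n % 3 ≠ 2 := by
    intro h3
    have := h.le_of_collatz_eq (m := 2 * (n / 3) + 1) (by omega)
    rw [collatz_two_mul_add_one] at this
    omega
  have h4 : n % 4 ≠ 1 := by
    intro h4
    have := h.le_collatz_iterate 2
    rw [show n = 4 * (n / 4) + 1 by omega, collatz_iterate_four_mul_add_one] at this
    omega
  have h16 : n % 16 ≠ 3 := by
    intro h16
    have := h.le_collatz_iterate 4
    rw [show n = 16 * (n / 16) + 3 by omega, collatz_iterate_sixteen_mul_add_three] at this
    omega
  exact ⟨Nat.odd_iff.mpr hodd, h3, h4, h16, fun w => by omega⟩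
end
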